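/- arXiv:1202.5848 — 2 statements merged into one kernel-verified Lean document; each statement's English description precedes it below -/
import Mathlib

section
/- The number of tuples (k_1, ..., k_{n-1}) of non-negative integers satisfying k_1 + k_2 + ... + k_i ≤ i for all i = 1, ..., n-1 equals the Catalan number C_n. -/
/-!
Choosing `k₀ = t ≤ c` first, the tail of a tuple whose partial sums satisfy
`k₀ + ⋯ + k_i ≤ i + c` is again such a tuple, with slack `c + 1 - t`. Hence the number
`N(m, c)` of such tuples of length `m` obeys the ballot recursion
`N(0, c) = 1`, `N(m+1, 0) = N(m, 1)`, `N(m+1, c+1) = N(m+1, c) + N(m, c+2)`, whose solution is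
`(m + c + 1) N(m, c) = (c + 1) binom(2m + c, m)`. At slack `0` this is `binom(2m, m) / (m + 1)`,
the Catalan number, and the tuples of the theorem (length `n - 1`, slack `1`) are counted by
`N(n - 1, 1) = N(n, 0)`.
-/

open Finset

def boundedPrefixTuples : (m : ℕ) → ℕ → Finset (Fin m → ℕ)
  | 0, _ => {Fin.elim0}
  | m + 1, c => (range (c + 1)).biUnion fun t =>
      (boundedPrefixTuples m (c + 1 - t)).image (Fin.cons t)

lemma sum_filter_le_zero {m : ℕ} (k : Fin (m + 1) → ℕ) :
    ∑ j ∈ univ.filter (· ≤ (0 : Fin (m + 1))), k j = k 0 := by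
  rw [sum_filter, Fin.sum_univ_succ]
  simp

lemma sum_filter_le_succ {m : ℕ} (k : Fin (m + 1) → ℕ) (i : Fin m) :
    ∑ j ∈ univ.filter (· ≤ i.succ), k j = k 0 + ∑ j ∈ univ.filter (· ≤ i), Fin.tail k j := by
  rw [sum_filter, Fin.sum_univ_succ, sum_filter]
  simp [Fin.succ_le_succ_iff, Fin.tail]

lemma mem_boundedPrefixTuples_succ {m c : ℕ} {k : Fin (m + 1) → ℕ} :
    k ∈ boundedPrefixTuples (m + 1) c ↔
      k 0 ≤ c ∧ Fin.tail k ∈ boundedPrefixTuples m (c + 1 - k 0) := by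
  rw [← Fin.cons_self_tail k]
  simp only [boundedPrefixTuples, mem_biUnion, mem_range, mem_image, Fin.cons_zero,
    Fin.tail_cons, Nat.lt_succ_iff]
  constructor
  · rintro ⟨t, ht, p, hp, hpk⟩
    obtain ⟨rfl, rfl⟩ := Fin.cons_injective2 hpk
    exact ⟨ht, hp⟩
  · rintro ⟨h0, htail⟩
    exact ⟨_, h0, _, htail, rfl⟩

lemma mem_boundedPrefixTuples {m c : ℕ} {k : Fin m → ℕ} :
    k ∈ boundedPrefixTuples m c ↔
      ∀ i : Fin m, ∑ j ∈ univ.filter (· ≤ i), k j ≤ (i : ℕ) + c := by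
  induction m generalizing c with
  | zero => simp [boundedPrefixTuples, Subsingleton.elim k Fin.elim0]
  | succ m ih =>
    rw [mem_boundedPrefixTuples_succ, ih, Fin.forall_fin_succ, sum_filter_le_zero]
    simp only [sum_filter_le_succ, Fin.val_zero, Fin.val_succ, zero_add]
    exact and_congr_right fun _ => forall_congr' fun _ => by omega

lemma card_boundedPrefixTuples_succ (m c : ℕ) :
    #(boundedPrefixTuples (m + 1) c) =
      ∑ t ∈ range (c + 1), #(boundedPrefixTuples m (c + 1 - t)) := by
  rw [boundedPrefixTuples, card_biUnion]
  · simp only [card_image_of_injective _ (Fin.cons_right_injective _)]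
  · intro s _ t _ hst
    simp only [Function.onFun, disjoint_left, mem_image]
    rintro _ ⟨p, _, rfl⟩ ⟨q, _, hqp⟩
    exact hst (Fin.cons_injective2 hqp).1.symm

lemma card_boundedPrefixTuples_succ_zero (m : ℕ) :
    #(boundedPrefixTuples (m + 1) 0) = #(boundedPrefixTuples m 1) := by
  simp [card_boundedPrefixTuples_succ]

lemma card_boundedPrefixTuples_succ_succ (m c : ℕ) :
    #(boundedPrefixTuples (m + 1) (c + 1)) =
      #(boundedPrefixTuples (m + 1) c) + #(boundedPrefixTuples m (c + 2)) := by
  rw [card_boundedPrefixTuples_succ, card_boundedPrefixTuples_succ, sum_range_succ']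
  congr 1
  exact sum_congr rfl fun t _ => by congr 2; omega

lemma mul_eq_choose_of_ballot_recursion (f : ℕ → ℕ → ℕ) (h_len_zero : ∀ c, f 0 c = 1)
    (h_slack_zero : ∀ m, f (m + 1) 0 = f m 1)
    (h_slack_succ : ∀ m c, f (m + 1) (c + 1) = f (m + 1) c + f m (c + 2)) (m c : ℕ) :
    (m + c + 1) * f m c = (c + 1) * (2 * m + c).choose m := by
  induction m generalizing c with
  | zero => simp [h_len_zero]
  | succ m ih =>
    induction c with
    | zero =>
      have h := ih 1
      rw [h_slack_zero, show 2 * (m + 1) + 0 = 2 * m + 1 + 1 by ring, Nat.choose_succ_succ',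
        Nat.choose_symm_half]
      linarith
    | succ c ihc =>
      have hc := ih (c + 2)
      have hpascal := Nat.choose_succ_right_eq (2 * m + c + 2) m
      rw [show 2 * m + c + 2 - m = m + c + 2 by omega] at hpascal
      rw [show 2 * (m + 1) + c = 2 * m + c + 2 by ring] at ihc
      rw [show 2 * m + (c + 2) = 2 * m + c + 2 by ring] at hc
      rw [h_slack_succ, show 2 * (m + 1) + (c + 1) = 2 * m + c + 2 + 1 by ring,
        Nat.choose_succ_succ']
      refine Nat.eq_of_mul_eq_mul_left (show 0 < m + c + 2 by omega) ?_
      zify at ihc hc hpascal ⊢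
      linear_combination ((m : ℤ) + c + 3) * ihc + ((m : ℤ) + c + 2) * hc - hpascal

lemma card_boundedPrefixTuples_zero_eq_catalan (m : ℕ) :
    #(boundedPrefixTuples m 0) = catalan m := by
  have h := mul_eq_choose_of_ballot_recursion (fun m c => #(boundedPrefixTuples m c))
    (fun _ => rfl) card_boundedPrefixTuples_succ_zero card_boundedPrefixTuples_succ_succ m 0
  rw [add_zero, add_zero, zero_add, one_mul, ← Nat.centralBinom_eq_two_mul_choose,
    ← succ_mul_catalan_eq_centralBinom] at h
  exact Nat.eq_of_mul_eq_mul_left m.succ_pos h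

/-- The number of tuples `(k₁, …, k_{n-1})` of non-negative integers satisfying
`k₁ + ⋯ + k_i ≤ i` for all `i = 1, …, n-1` equals the Catalan number `Cₙ`. -/
theorem stmt_0 (n : ℕ) :
    Set.ncard {k : Fin (n - 1) → ℕ |
      ∀ i : Fin (n - 1), ∑ j ∈ Finset.univ.filter (fun j => j ≤ i), k j ≤ (i : ℕ) + 1}
      = catalan n := by
  calc _ = (boundedPrefixTuples (n - 1) 1 : Set (Fin (n - 1) → ℕ)).ncard := by
        congr 1; ext k; simp [mem_boundedPrefixTuples]
    _ = #(boundedPrefixTuples (n - 1) 1) := Set.ncard_coe_finset _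
    _ = catalan n := by
      cases n with
      | zero => simp [boundedPrefixTuples]
      | succ m => rw [Nat.add_sub_cancel, ← card_boundedPrefixTuples_succ_zero,
          card_boundedPrefixTuples_zero_eq_catalan]
end

section
/- Sylvester's identity for determinants: for any two s×s matrices M and N over a commutative ring and any k ≤ s, det(M)·det(N) = Σ_{1 ≤ r_1 < ... < r_k ≤ s} det(M')·det(N'), where M' and N' are obtained from M and N by interchanging the first k columns of N with the columns r_1, ..., r_k of M (preserving the order of columns). -/
open scoped Classical

/-!
For `M = 1` the identity is the Laplace expansion of `det N` along its first `k` columns. Both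
sides are multilinear in the columns of `N`, so it suffices to take
`N = (1 : Matrix).submatrix id g`. Then the term of `r` is
`det ((1 : Matrix).submatrix id (a ∘ b))` for explicit index maps `a`, `b`; it vanishes unless
`a ∘ b` is injective, which forces `a ∘ b = g` and the range of `r` to be the image under `g` of
the first `k` columns, leaving exactly one term, equal to `det N`.

Exchanging columns commutes with multiplication on the left, so `N = M * (M⁻¹ * N)` reduces the
case of invertible `M` to `M = 1`. The general case follows by specialising generic matrices over
a polynomial ring over `ℤ`, where `det M` is a non-zero-divisor and becomes invertible in the
fraction ring.
-/

open Function

theorem Finset.eq_orderEmbOfFin_of_subset_range {α : Type*} [LinearOrder α] {T : Finset α}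
    {k : ℕ} (hT : T.card = k) {r : Fin k → α} (hr : StrictMono r)
    (hsub : ↑T ⊆ Set.range r) :
    r = T.orderEmbOfFin hT := by
  have hTr : T = Finset.univ.image r :=
    Finset.eq_of_subset_of_card_le (fun x hx => by simpa using hsub hx)
      (by rw [Finset.card_image_of_injective _ hr.injective, Finset.card_univ, Fintype.card_fin,
        hT])
  exact Finset.orderEmbOfFin_unique hT
    (fun x => hTr ▸ Finset.mem_image_of_mem r (Finset.mem_univ x)) hr

namespace Matrix

variable {α β R : Type*} {s k : ℕ}

noncomputable def colExchangeLeft (hk : k ≤ s) (M N : Matrix (Fin s) (Fin s) α)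
    (r : Fin k → Fin s) : Matrix (Fin s) (Fin s) α :=
  of fun p q => if h : q ∈ Set.range r then N p (Fin.castLE hk h.choose) else M p q

def colExchangeRight (M N : Matrix (Fin s) (Fin s) α) (r : Fin k → Fin s) :
    Matrix (Fin s) (Fin s) α :=
  of fun p q => if h : (q : ℕ) < k then M p (r ⟨q, h⟩) else N p q

noncomputable def colExchangeSum [CommRing R] (hk : k ≤ s) (M N : Matrix (Fin s) (Fin s) R) : R :=
  ∑ r ∈ Finset.univ.filter (fun r : Fin k → Fin s => StrictMono r),
    (colExchangeLeft hk M N r).det * (colExchangeRight M N r).det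

section colExchange

variable (hk : k ≤ s) (M N : Matrix (Fin s) (Fin s) α) {r : Fin k → Fin s}

theorem colExchangeLeft_apply_self (hr : Injective r) (p : Fin s) (i : Fin k) :
    colExchangeLeft hk M N r p (r i) = N p (Fin.castLE hk i) := by
  have h : r i ∈ Set.range r := ⟨i, rfl⟩
  rw [colExchangeLeft, of_apply, dif_pos h, hr h.choose_spec]

theorem colExchangeLeft_apply_of_notMem {p q : Fin s} (hq : q ∉ Set.range r) :
    colExchangeLeft hk M N r p q = M p q :=
  dif_neg hq

theorem colExchangeRight_apply_of_lt {p q : Fin s} (hq : (q : ℕ) < k) :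
    colExchangeRight M N r p q = M p (r ⟨q, hq⟩) :=
  dif_pos hq

theorem colExchangeRight_apply_of_not_lt {p q : Fin s} (hq : ¬(q : ℕ) < k) :
    colExchangeRight M N r p q = N p q :=
  dif_neg hq

theorem colExchangeLeft_updateCol_of_lt (hr : Injective r) {j : Fin s} (hj : (j : ℕ) < k)
    (z : Fin s → α) :
    colExchangeLeft hk M (N.updateCol j z) r =
      (colExchangeLeft hk M N r).updateCol (r ⟨j, hj⟩) z := by
  ext p q
  by_cases hq : q ∈ Set.range r
  · obtain ⟨i, rfl⟩ := hq
    simp only [colExchangeLeft_apply_self hk _ _ hr, updateCol_apply, hr.eq_iff, Fin.ext_iff,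
      Fin.val_castLE]
  · have hqj : q ≠ r ⟨j, hj⟩ := fun h => hq ⟨_, h.symm⟩
    rw [colExchangeLeft_apply_of_notMem hk _ _ hq, updateCol_ne hqj,
      colExchangeLeft_apply_of_notMem hk _ _ hq]

theorem colExchangeLeft_updateCol_of_not_lt {j : Fin s} (hj : ¬(j : ℕ) < k) (z : Fin s → α) :
    colExchangeLeft hk M (N.updateCol j z) r = colExchangeLeft hk M N r := by
  ext p q
  simp only [colExchangeLeft, of_apply]
  split_ifs with hq
  · exact updateCol_ne fun h => hj (by simp [← h])
  · rfl

theorem colExchangeRight_updateCol_of_lt {j : Fin s} (hj : (j : ℕ) < k) (z : Fin s → α) :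
    colExchangeRight M (N.updateCol j z) r = colExchangeRight M N r := by
  ext p q
  simp only [colExchangeRight, of_apply]
  split_ifs with hq
  · rfl
  · exact updateCol_ne fun h => hq (h ▸ hj)

theorem colExchangeRight_updateCol_of_not_lt {j : Fin s} (hj : ¬(j : ℕ) < k) (z : Fin s → α) :
    colExchangeRight M (N.updateCol j z) r = (colExchangeRight M N r).updateCol j z := by
  ext p q
  by_cases hq : (q : ℕ) < k
  · have hqj : q ≠ j := fun h => hj (h ▸ hq)
    rw [colExchangeRight_apply_of_lt _ _ hq, updateCol_ne hqj, colExchangeRight_apply_of_lt _ _ hq]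
  · rw [colExchangeRight_apply_of_not_lt _ _ hq, updateCol_apply, updateCol_apply,
      colExchangeRight_apply_of_not_lt _ _ hq]

theorem transpose_of_update (v : Fin s → Fin s → α) (j : Fin s) (z : Fin s → α) :
    (of (Function.update v j z))ᵀ = (of v)ᵀ.updateCol j z :=
  (updateCol_transpose ..).symm

variable (r)

theorem map_colExchangeLeft (f : α → β) :
    (colExchangeLeft hk M N r).map f = colExchangeLeft hk (M.map f) (N.map f) r := by
  ext p q
  simp only [colExchangeLeft, map_apply, of_apply, apply_dite f]

theorem map_colExchangeRight (f : α → β) :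
    (colExchangeRight M N r).map f = colExchangeRight (M.map f) (N.map f) r := by
  ext p q
  simp only [colExchangeRight, map_apply, of_apply, apply_dite f]

end colExchange

section Index

noncomputable def colExchangeLeftIndex (hk : k ≤ s) (g : Fin s → Fin s) (r : Fin k → Fin s) :
    Fin s → Fin s :=
  fun q => if h : q ∈ Set.range r then g (Fin.castLE hk h.choose) else q

def colExchangeRightIndex (g : Fin s → Fin s) (r : Fin k → Fin s) : Fin s → Fin s :=
  fun q => if h : (q : ℕ) < k then r ⟨q, h⟩ else g q

variable (hk : k ≤ s) (g : Fin s → Fin s) {r : Fin k → Fin s}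

theorem colExchangeLeftIndex_apply_self (hr : Injective r) (i : Fin k) :
    colExchangeLeftIndex hk g r (r i) = g (Fin.castLE hk i) := by
  have h : r i ∈ Set.range r := ⟨i, rfl⟩
  rw [colExchangeLeftIndex, dif_pos h, hr h.choose_spec]

theorem colExchangeLeftIndex_of_notMem {q : Fin s} (hq : q ∉ Set.range r) :
    colExchangeLeftIndex hk g r q = q :=
  dif_neg hq

theorem colExchangeRightIndex_castLE (i : Fin k) :
    colExchangeRightIndex g r (Fin.castLE hk i) = r i :=
  dif_pos (by simp)

theorem colExchangeRightIndex_of_not_lt {q : Fin s} (hq : ¬(q : ℕ) < k) :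
    colExchangeRightIndex g r q = g q :=
  dif_neg hq

theorem colExchangeIndex_comp_of_injective (hr : Injective r)
    (h : Injective (colExchangeLeftIndex hk g r ∘ colExchangeRightIndex g r)) :
    colExchangeLeftIndex hk g r ∘ colExchangeRightIndex g r = g ∧
      ∀ i, g (Fin.castLE hk i) ∈ Set.range r := by
  have hL : Injective (colExchangeLeftIndex hk g r) :=
    Finite.injective_iff_surjective.2 (Finite.injective_iff_surjective.1 h).of_comp
  have hlow (i : Fin k) : (colExchangeLeftIndex hk g r ∘ colExchangeRightIndex g r)
      (Fin.castLE hk i) = g (Fin.castLE hk i) := by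
    rw [Function.comp_apply, colExchangeRightIndex_castLE, colExchangeLeftIndex_apply_self _ _ hr]
  have hmem (i : Fin k) : g (Fin.castLE hk i) ∈ Set.range r := by
    by_contra hi
    have := hL ((colExchangeLeftIndex_of_notMem hk g hi).trans
      (colExchangeLeftIndex_apply_self hk g hr i).symm)
    exact hi ⟨i, this.symm⟩
  refine ⟨funext fun q => ?_, hmem⟩
  by_cases hq : (q : ℕ) < k
  · exact hlow ⟨q, hq⟩
  by_cases hgq : g q ∈ Set.range r
  · obtain ⟨i, hi⟩ := hgq
    have hqi : (colExchangeLeftIndex hk g r ∘ colExchangeRightIndex g r) q =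
        (colExchangeLeftIndex hk g r ∘ colExchangeRightIndex g r) (Fin.castLE hk i) := by
      rw [hlow, Function.comp_apply, colExchangeRightIndex_of_not_lt _ hq, ← hi,
        colExchangeLeftIndex_apply_self _ _ hr]
    exact (hq (by simp [h hqi])).elim
  · rw [Function.comp_apply, colExchangeRightIndex_of_not_lt _ hq,
      colExchangeLeftIndex_of_notMem _ _ hgq]

theorem colExchangeIndex_comp_of_range (hr : Injective r)
    (hg : ∀ q, g q ∈ Set.range r ↔ (q : ℕ) < k) :
    colExchangeLeftIndex hk g r ∘ colExchangeRightIndex g r = g := by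
  funext q
  by_cases hq : (q : ℕ) < k
  · obtain ⟨i, rfl⟩ : ∃ i : Fin k, Fin.castLE hk i = q := ⟨⟨q, hq⟩, rfl⟩
    rw [Function.comp_apply, colExchangeRightIndex_castLE, colExchangeLeftIndex_apply_self _ _ hr]
  · rw [Function.comp_apply, colExchangeRightIndex_of_not_lt _ hq,
      colExchangeLeftIndex_of_notMem _ _ (mt (hg q).1 hq)]

theorem colExchangeLeft_submatrix (M : Matrix (Fin s) (Fin s) α) (r : Fin k → Fin s) :
    colExchangeLeft hk M (M.submatrix id g) r =
      M.submatrix id (colExchangeLeftIndex hk g r) := by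
  ext p q
  simp only [colExchangeLeft, colExchangeLeftIndex, submatrix_apply, of_apply, id,
    apply_dite (M p)]

theorem colExchangeRight_submatrix (M : Matrix (Fin s) (Fin s) α) (r : Fin k → Fin s) :
    colExchangeRight M (M.submatrix id g) r =
      M.submatrix id (colExchangeRightIndex g r) := by
  ext p q
  simp only [colExchangeRight, colExchangeRightIndex, submatrix_apply, of_apply, id,
    apply_dite (M p)]

end Index

section Ring

variable [CommRing R] (hk : k ≤ s) (M N : Matrix (Fin s) (Fin s) R) (r : Fin k → Fin s)

theorem mul_colExchangeLeft (A : Matrix (Fin s) (Fin s) R) :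
    A * colExchangeLeft hk M N r = colExchangeLeft hk (A * M) (A * N) r := by
  ext p q
  simp only [colExchangeLeft, mul_apply, of_apply]
  split_ifs <;> rfl

theorem mul_colExchangeRight (A : Matrix (Fin s) (Fin s) R) :
    A * colExchangeRight M N r = colExchangeRight (A * M) (A * N) r := by
  ext p q
  simp only [colExchangeRight, mul_apply, of_apply]
  split_ifs <;> rfl

theorem colExchangeSum_mul_left (A : Matrix (Fin s) (Fin s) R) :
    colExchangeSum hk (A * M) (A * N) = A.det ^ 2 * colExchangeSum hk M N := by
  simp only [colExchangeSum, Finset.mul_sum, ← mul_colExchangeLeft, ← mul_colExchangeRight,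
    det_mul]
  exact Finset.sum_congr rfl fun _ _ => by ring

theorem _root_.RingHom.map_colExchangeSum {S : Type*} [CommRing S] (f : R →+* S) :
    f (colExchangeSum hk M N) = colExchangeSum hk (M.map f) (N.map f) := by
  simp only [colExchangeSum, map_sum, map_mul, RingHom.map_det, RingHom.mapMatrix_apply,
    map_colExchangeLeft, map_colExchangeRight]

theorem det_submatrix_eq_zero_of_not_injective {f : Fin s → Fin s} (hf : ¬Injective f) :
    (M.submatrix id f).det = 0 := by
  obtain ⟨a, b, hab, hne⟩ := Function.not_injective_iff.1 hf
  exact det_zero_of_column_eq hne fun p => by simp [hab]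

theorem det_one_submatrix_mul_det_one_submatrix (a b : Fin s → Fin s) :
    ((1 : Matrix (Fin s) (Fin s) R).submatrix id a).det *
        ((1 : Matrix (Fin s) (Fin s) R).submatrix id b).det =
      ((1 : Matrix (Fin s) (Fin s) R).submatrix id (a ∘ b)).det := by
  have h := mul_submatrix_one (Equiv.refl (Fin s)) b ((1 : Matrix (Fin s) (Fin s) R).submatrix id a)
  simp only [Equiv.coe_refl, Equiv.refl_symm, submatrix_submatrix, Function.id_comp] at h
  rw [← det_mul, h]

theorem det_mul_det_colExchange_one_submatrix (g : Fin s → Fin s) :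
    (colExchangeLeft hk 1 ((1 : Matrix (Fin s) (Fin s) R).submatrix id g) r).det *
        (colExchangeRight 1 ((1 : Matrix (Fin s) (Fin s) R).submatrix id g) r).det =
      ((1 : Matrix (Fin s) (Fin s) R).submatrix id
        (colExchangeLeftIndex hk g r ∘ colExchangeRightIndex g r)).det := by
  rw [colExchangeLeft_submatrix, colExchangeRight_submatrix,
    det_one_submatrix_mul_det_one_submatrix]

theorem det_one_submatrix_eq_colExchangeSum (g : Fin s → Fin s) :
    ((1 : Matrix (Fin s) (Fin s) R).submatrix id g).det =
      colExchangeSum hk 1 ((1 : Matrix (Fin s) (Fin s) R).submatrix id g) := by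
  rw [colExchangeSum,
    Finset.sum_congr rfl fun r _ => det_mul_det_colExchange_one_submatrix hk r g]
  by_cases hg : Injective g
  · set T := Finset.univ.image (g ∘ Fin.castLE hk)
    have hT : T.card = k := by
      rw [Finset.card_image_of_injective _ (hg.comp (Fin.castLE_injective hk)), Finset.card_univ,
        Fintype.card_fin]
    rw [Finset.sum_eq_single_of_mem (T.orderEmbOfFin hT : Fin k → Fin s)
      (by simpa using (T.orderEmbOfFin hT).strictMono)]
    · rw [colExchangeIndex_comp_of_range hk g (T.orderEmbOfFin hT).injective]
      intro q
      rw [Finset.range_orderEmbOfFin]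
      simpa [T, hg.eq_iff] using
        ⟨fun ⟨i, hi⟩ => hi ▸ i.isLt, fun h => ⟨⟨q, h⟩, rfl⟩⟩
    · intro r hr hne
      by_contra hdet
      have hr : StrictMono r := (Finset.mem_filter.1 hr).2
      obtain ⟨-, hmem⟩ := colExchangeIndex_comp_of_injective hk g hr.injective
        (not_imp_comm.1 (det_submatrix_eq_zero_of_not_injective 1) hdet)
      refine hne (Finset.eq_orderEmbOfFin_of_subset_range hT hr fun x hx => ?_)
      obtain ⟨i, -, rfl⟩ := Finset.mem_image.1 hx
      exact hmem i
  · rw [det_submatrix_eq_zero_of_not_injective 1 hg]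
    refine (Finset.sum_eq_zero fun r hr => ?_).symm
    by_contra hdet
    have hinj := not_imp_comm.1 (det_submatrix_eq_zero_of_not_injective 1) hdet
    rw [(colExchangeIndex_comp_of_injective hk g (Finset.mem_filter.1 hr).2.injective hinj).1]
      at hinj
    exact hg hinj

theorem det_mul_det_colExchange_updateCol {r : Fin k → Fin s} (hr : Injective r) (j : Fin s)
    (z : Fin s → R) :
    (colExchangeLeft hk M (N.updateCol j z) r).det * (colExchangeRight M (N.updateCol j z) r).det =
      if h : (j : ℕ) < k then
        ((colExchangeLeft hk M N r).updateCol (r ⟨j, h⟩) z).det * (colExchangeRight M N r).det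
      else (colExchangeLeft hk M N r).det * ((colExchangeRight M N r).updateCol j z).det := by
  split_ifs with h
  · rw [colExchangeLeft_updateCol_of_lt hk _ _ hr h, colExchangeRight_updateCol_of_lt _ _ h]
  · rw [colExchangeLeft_updateCol_of_not_lt hk _ _ h, colExchangeRight_updateCol_of_not_lt _ _ h]

noncomputable def colExchangeSumMultilinear :
    MultilinearMap R (fun _ : Fin s => Fin s → R) R :=
  MultilinearMap.mk' (fun v => colExchangeSum hk M (of v)ᵀ)
    (fun v j x y => by
      simp only [colExchangeSum, transpose_of_update, ← Finset.sum_add_distrib]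
      refine Finset.sum_congr rfl fun r hr => ?_
      simp only [det_mul_det_colExchange_updateCol hk _ _ (Finset.mem_filter.1 hr).2.injective]
      split_ifs <;> simp only [det_updateCol_add, add_mul, mul_add])
    (fun v j c x => by
      simp only [colExchangeSum, transpose_of_update, smul_eq_mul, Finset.mul_sum]
      refine Finset.sum_congr rfl fun r hr => ?_
      simp only [det_mul_det_colExchange_updateCol hk _ _ (Finset.mem_filter.1 hr).2.injective]
      split_ifs <;> simp only [det_updateCol_smul] <;> ring)

theorem det_eq_colExchangeSum_one (C : Matrix (Fin s) (Fin s) R) :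
    C.det = colExchangeSum hk 1 C := by
  have h : (detRowAlternating : AlternatingMap R (Fin s → R) R (Fin s)).toMultilinearMap =
      colExchangeSumMultilinear hk 1 :=
    Module.Basis.ext_multilinear (fun _ => Pi.basisFun R (Fin s)) fun g => by
      have hg : (of fun i => Pi.basisFun R (Fin s) (g i))ᵀ =
          (1 : Matrix (Fin s) (Fin s) R).submatrix id g := by
        ext p q
        simp [Pi.single_apply, one_apply]
      show det (of fun i => Pi.basisFun R (Fin s) (g i)) =
        colExchangeSum hk 1 (of fun i => Pi.basisFun R (Fin s) (g i))ᵀ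
      rw [← det_transpose, hg, det_one_submatrix_eq_colExchangeSum]
  have hC := MultilinearMap.congr_fun h Cᵀ
  change det Cᵀ = colExchangeSum hk 1 Cᵀᵀ at hC
  rwa [det_transpose, transpose_transpose] at hC

theorem det_mul_det_eq_colExchangeSum_of_isUnit (hM : IsUnit M.det) :
    M.det * N.det = colExchangeSum hk M N := by
  have hN : M * (M⁻¹ * N) = N := mul_nonsing_inv_cancel_left M N hM
  calc M.det * N.det = M.det ^ 2 * (M⁻¹ * N).det := by
        conv_lhs => rw [← hN, det_mul]
        ring
    _ = colExchangeSum hk (M * 1) (M * (M⁻¹ * N)) := by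
        rw [colExchangeSum_mul_left, ← det_eq_colExchangeSum_one]
    _ = colExchangeSum hk M N := by rw [mul_one, hN]

theorem det_mul_det_eq_colExchangeSum_of_mem_nonZeroDivisors (hM : M.det ∈ nonZeroDivisors R) :
    M.det * N.det = colExchangeSum hk M N := by
  let f := algebraMap R (FractionRing R)
  apply IsFractionRing.injective R (FractionRing R)
  have hunit : IsUnit (M.map f).det := by
    rw [← RingHom.mapMatrix_apply, ← RingHom.map_det]
    exact IsLocalization.map_units (FractionRing R) ⟨_, hM⟩
  rw [map_mul, RingHom.map_det, RingHom.map_det, RingHom.map_colExchangeSum]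
  exact det_mul_det_eq_colExchangeSum_of_isUnit hk _ _ hunit

theorem det_mul_det_eq_colExchangeSum : M.det * N.det = colExchangeSum hk M N := by
  let f : MvPolynomial (Fin s × Fin s) ℤ →+* R :=
    MvPolynomial.eval₂Hom (Int.castRingHom R) fun p => N p.1 p.2
  let φ : MvPolynomial (Fin s × Fin s) (MvPolynomial (Fin s × Fin s) ℤ) →+* R :=
    MvPolynomial.eval₂Hom f fun p => M p.1 p.2
  let X := mvPolynomialX (Fin s) (Fin s) (MvPolynomial (Fin s × Fin s) ℤ)
  let Y := (mvPolynomialX (Fin s) (Fin s) ℤ).map (MvPolynomial.C (σ := Fin s × Fin s))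
  have hX : X.map φ = M := mvPolynomialX_map_eval₂ f M
  have hY : Y.map φ = N := by
    rw [Matrix.map_map, ← mvPolynomialX_map_eval₂ (Int.castRingHom R) N]
    congr 1
    ext : 1
    exact MvPolynomial.eval₂_C _ _ _
  have hXY := det_mul_det_eq_colExchangeSum_of_mem_nonZeroDivisors hk X Y
    (mem_nonZeroDivisors_of_ne_zero (det_mvPolynomialX_ne_zero _ _))
  simpa only [map_mul, RingHom.map_det, RingHom.mapMatrix_apply, RingHom.map_colExchangeSum, hX,
    hY] using congrArg φ hXY

end Ring

end Matrix

/-- Sylvester's identity: for `s×s` matrices `M, N` over a commutative ring and `k ≤ s`,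
`det M · det N = Σ_{r₁<⋯<r_k} det M' · det N'`, where `M'`, `N'` are obtained by
interchanging the first `k` columns of `N` with the columns `r₁,…,r_k` of `M`
(preserving the order of columns). -/
theorem stmt_1 (R : Type*) [CommRing R] (s k : ℕ) (hk : k ≤ s)
    (M N : Matrix (Fin s) (Fin s) R) :
    M.det * N.det =
      ∑ r ∈ Finset.univ.filter (fun r : Fin k → Fin s => StrictMono r),
        (Matrix.of fun (p q : Fin s) =>
            if h : q ∈ Set.range r then N p (Fin.castLE hk h.choose) else M p q).det *
        (Matrix.of fun (p q : Fin s) =>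
            if h : (q : ℕ) < k then M p (r ⟨q, h⟩) else N p q).det :=
  Matrix.det_mul_det_eq_colExchangeSum hk M N
end
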